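/- For every dimension d ≥ 1, every integer k ≥ 0, and all integers n_1,…,n_d ≥ 3, the limit inferior as n → ∞ of β_k(T^(d)[n])/n^d is at least τ_k(T[n_1,…,n_d]) = β_k(T[n_1,…,n_d])/(n_1⋯n_d). -/

import Mathlib

/-!
Let `S` be a maximum `k`-dependent set of `T[m₁,…,m_d]` and let `q_i m_i < n`. The box
`∏ [0, q_i m_i)` of `T^(d)[n]` is tiled by `∏ q_i` translates of the fundamental domain of
`T[m₁,…,m_d]`, and the union of the corresponding translates of `S` is again `k`-dependent:
inside the box a king never wraps around modulo `n`, so reducing coordinates modulo `m_i`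
sends the neighbours of a point to neighbours of its image, injectively because `m_i ≥ 3`.
With `q_i = ⌊(n - 1)/m_i⌋` this gives `β_k(T^(d)[n]) ≥ β_k(T[m₁,…,m_d]) ∏ q_i`, and
`q_i / n → 1 / m_i`.
-/

open Filter Topology

/-- The `d`-dimensional kings graph on `Fin (n 0) × ⋯ × Fin (n (d-1))`:
distinct vertices are adjacent iff their coordinates differ by at most 1. -/
def kingsGraph (d : ℕ) (n : Fin d → ℕ) :
    SimpleGraph (∀ i : Fin d, Fin (n i)) where
  Adj u v := u ≠ v ∧ ∀ i, |((v i : ℤ)) - (u i : ℤ)| ≤ 1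
  symm := by
    constructor
    rintro u v ⟨h1, h2⟩
    exact ⟨h1.symm, fun i => by rw [abs_sub_comm]; exact h2 i⟩
  loopless := by constructor; intro v h; exact h.1 rfl

/-- The `d`-dimensional toroidal kings graph on `ZMod (n 0) × ⋯ × ZMod (n (d-1))`:
distinct vertices are adjacent iff each coordinate difference is `-1`, `0` or `1`. -/
def torusGraph (d : ℕ) (n : Fin d → ℕ) :
    SimpleGraph (∀ i : Fin d, ZMod (n i)) where
  Adj u v := u ≠ v ∧ ∀ i, v i - u i = -1 ∨ v i - u i = 0 ∨ v i - u i = 1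
  symm := by
    constructor
    rintro u v ⟨h1, h2⟩
    refine ⟨h1.symm, fun i => ?_⟩
    rcases h2 i with h | h | h
    · right; right; rw [show u i - v i = -(v i - u i) by ring, h]; norm_num
    · right; left; rw [show u i - v i = -(v i - u i) by ring, h]; norm_num
    · left; rw [show u i - v i = -(v i - u i) by ring, h]
  loopless := by constructor; intro v h; exact h.1 rfl

/-- A set `S` of vertices is `k`-dependent if every vertex of `S`
has at most `k` neighbors in `S`. -/
def IsKDependent {V : Type*} (G : SimpleGraph V) (k : ℕ) (S : Set V) : Prop :=
  ∀ v ∈ S, (S ∩ G.neighborSet v).ncard ≤ k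

/-- `betaK G k` is the maximum cardinality of a `k`-dependent set in `G`. -/
noncomputable def betaK {V : Type*} (G : SimpleGraph V) (k : ℕ) : ℕ :=
  sSup {m | ∃ S : Set V, IsKDependent G k S ∧ S.ncard = m}

/-- A set `S` of vertices is half-dependent if every vertex `v ∈ S`
has at most `|N(v)|/2` neighbors in `S`. -/
def IsHalfDependent {V : Type*} (G : SimpleGraph V) (S : Set V) : Prop :=
  ∀ v ∈ S, 2 * (S ∩ G.neighborSet v).ncard ≤ (G.neighborSet v).ncard

/-- `halfNum G` is the maximum cardinality of a half-dependent set in `G`. -/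
noncomputable def halfNum {V : Type*} (G : SimpleGraph V) : ℕ :=
  sSup {m | ∃ S : Set V, IsHalfDependent G S ∧ S.ncard = m}

/-- A graph is vertex-transitive if any vertex can be mapped to any other
by a graph automorphism. -/
def IsVertexTransitive {V : Type*} (G : SimpleGraph V) : Prop :=
  ∀ u v : V, ∃ f : G ≃g G, f u = v

open Set

section Dependence

variable {V W : Type*}

lemma betaK_bddAbove [Finite V] (G : SimpleGraph V) (k : ℕ) :
    BddAbove {m | ∃ S : Set V, IsKDependent G k S ∧ S.ncard = m} :=
  ⟨Nat.card V, by rintro _ ⟨S, -, rfl⟩; exact ncard_le_card S⟩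

lemma IsKDependent.ncard_le_betaK [Finite V] {G : SimpleGraph V} {k : ℕ} {S : Set V}
    (hS : IsKDependent G k S) : S.ncard ≤ betaK G k :=
  le_csSup (betaK_bddAbove G k) (by exact ⟨S, hS, rfl⟩)

lemma exists_isKDependent_ncard_eq_betaK [Finite V] (G : SimpleGraph V) (k : ℕ) :
    ∃ S : Set V, IsKDependent G k S ∧ S.ncard = betaK G k :=
  Nat.sSup_mem ⟨0, by exact ⟨∅, fun _ h => h.elim, ncard_empty V⟩⟩ (betaK_bddAbove G k)

lemma betaK_le_card [Finite V] (G : SimpleGraph V) (k : ℕ) : betaK G k ≤ Nat.card V := by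
  obtain ⟨S, -, hS⟩ := exists_isKDependent_ncard_eq_betaK G k
  exact hS ▸ ncard_le_card S

lemma IsKDependent.of_mapsTo [Finite W] {G : SimpleGraph V} {H : SimpleGraph W} {k : ℕ}
    {S : Set W} (hS : IsKDependent H k S) {T : Set V} {f : V → W} (hTS : MapsTo f T S)
    (hadj : ∀ x ∈ T, ∀ y ∈ T, G.Adj x y → H.Adj (f x) (f y))
    (hinj : ∀ x ∈ T, InjOn f (T ∩ G.neighborSet x)) : IsKDependent G k T := fun x hx =>
  (ncard_le_ncard_of_injOn (t := S ∩ H.neighborSet (f x)) f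
    (fun y hy => ⟨hTS hy.1, hadj x hx y hy.1 hy.2⟩) (hinj x hx) (toFinite _)).trans
    (hS (f x) (hTS hx))

end Dependence

lemma eq_neg_one_or_zero_or_one_iff {R : Type*} [Ring R] {c : R} :
    (c = -1 ∨ c = 0 ∨ c = 1) ↔ ∃ e : ℤ, |e| ≤ 1 ∧ c = e := by
  constructor
  · rintro (rfl | rfl | rfl)
    exacts [⟨-1, by norm_num, by simp⟩, ⟨0, by norm_num, by simp⟩,
      ⟨1, by norm_num, by simp⟩]
  · rintro ⟨e, he, rfl⟩
    obtain rfl | rfl | rfl : e = -1 ∨ e = 0 ∨ e = 1 := by rw [abs_le] at he; omega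
    all_goals simp

lemma torusGraph_adj_iff {d : ℕ} {n : Fin d → ℕ} {u v : ∀ i, ZMod (n i)} :
    (torusGraph d n).Adj u v ↔ u ≠ v ∧ ∀ i, ∃ e : ℤ, |e| ≤ 1 ∧ v i - u i = e := by
  simp only [torusGraph, eq_neg_one_or_zero_or_one_iff]

lemma ZMod.val_sub_val_eq_of_sub_eq {n : ℕ} {a b : ZMod n} (ha : a.val + 1 < n)
    (hb : b.val + 1 < n) {e : ℤ} (he : |e| ≤ 1) (h : b - a = e) :
    (b.val : ℤ) - a.val = e := by
  have : NeZero n := ⟨by omega⟩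
  have hmod : ((b.val : ℤ) - a.val : ℤ) ≡ e [ZMOD n] := by
    rw [← ZMod.intCast_eq_intCast_iff]
    push_cast
    simp only [ZMod.natCast_zmod_val, h]
  have := Int.eq_zero_of_abs_lt_dvd hmod.symm.dvd (by rw [abs_le] at he; rw [abs_lt]; omega)
  omega

section Block

variable {d n : ℕ} {m q : Fin d → ℕ}

def reduceCoords (m : Fin d → ℕ) (x : Fin d → ZMod n) (i : Fin d) : ZMod (m i) :=
  (x i).val

/-- The union of the translates of `S` by the vectors `(m i * t i)_i` with `t i < q i`, which
fill the box `∏ i, [0, q i * m i)`. -/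
def blockLift (m q : Fin d → ℕ) (n : ℕ) (S : Set (∀ i, ZMod (m i))) :
    Set (Fin d → ZMod n) :=
  {x | (∀ i, (x i).val < q i * m i) ∧ reduceCoords m x ∈ S}

def blockPoint (m : Fin d → ℕ) (n : ℕ) (s : ∀ i, ZMod (m i)) (t : ∀ i, Fin (q i)) :
    Fin d → ZMod n :=
  fun i => ((m i * t i + (s i).val : ℕ) : ZMod n)

lemma abs_val_sub_val_le_one_of_adj {x y : Fin d → ZMod n} (hx : ∀ i, (x i).val + 1 < n)
    (hy : ∀ i, (y i).val + 1 < n) (h : (torusGraph d fun _ => n).Adj x y) (i : Fin d) :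
    |((y i).val : ℤ) - (x i).val| ≤ 1 := by
  obtain ⟨e, he, hyx⟩ := (torusGraph_adj_iff.1 h).2 i
  rwa [ZMod.val_sub_val_eq_of_sub_eq (hx i) (hy i) he hyx]

lemma val_eq_of_reduceCoords_eq {x y : Fin d → ZMod n} {i : Fin d}
    (h : reduceCoords m x i = reduceCoords m y i) (hlt : |((y i).val : ℤ) - (x i).val| < m i) :
    (x i).val = (y i).val :=
  ((ZMod.natCast_eq_natCast_iff _ _ _).1 h).eq_of_abs_lt hlt

lemma isKDependent_blockLift [NeZero n] {k : ℕ} {S : Set (∀ i, ZMod (m i))}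
    (hm : ∀ i, 3 ≤ m i) (hq : ∀ i, q i * m i < n) (hS : IsKDependent (torusGraph d m) k S) :
    IsKDependent (torusGraph d fun _ => n) k (blockLift m q n S) := by
  have : ∀ i, NeZero (m i) := fun i => ⟨by have := hm i; omega⟩
  have hbox : ∀ x ∈ blockLift m q n S, ∀ i, (x i).val + 1 < n := fun x hx i => by
    have := hx.1 i; have := hq i; omega
  refine hS.of_mapsTo (fun x hx => hx.2) (fun x hx y hy hxy => ?_)
    (fun x hx y hy y' hy' hyy' => ?_)
  · have hstep := abs_val_sub_val_le_one_of_adj (hbox x hx) (hbox y hy) hxy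
    refine torusGraph_adj_iff.2 ⟨fun h => hxy.ne ?_, fun i => ⟨_, hstep i, ?_⟩⟩
    · funext i
      refine ZMod.val_injective n (val_eq_of_reduceCoords_eq (congrFun h i) ?_)
      exact (hstep i).trans_lt (by have := hm i; omega)
    · simp [reduceCoords]
  · funext i
    refine ZMod.val_injective n (val_eq_of_reduceCoords_eq (congrFun hyy' i) ?_)
    have := abs_val_sub_val_le_one_of_adj (hbox x hx) (hbox y hy.1) hy.2 i
    have := abs_val_sub_val_le_one_of_adj (hbox x hx) (hbox y' hy'.1) hy'.2 i
    have := hm i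
    rw [abs_le] at *; rw [abs_lt]; omega

variable [∀ i, NeZero (m i)]

lemma val_blockPoint (hq : ∀ i, q i * m i ≤ n) (s : ∀ i, ZMod (m i)) (t : ∀ i, Fin (q i))
    (i : Fin d) : (blockPoint m n s t i).val = m i * t i + (s i).val :=
  ZMod.val_natCast_of_lt ((Nat.mul_add_lt_mul_of_lt_of_lt (t i).2 (s i).val_lt).trans_le (hq i))

lemma reduceCoords_blockPoint (hq : ∀ i, q i * m i ≤ n) (s : ∀ i, ZMod (m i))
    (t : ∀ i, Fin (q i)) : reduceCoords m (blockPoint m n s t) = s := by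
  funext i
  simp [reduceCoords, val_blockPoint hq]

lemma blockPoint_mem_blockLift (hq : ∀ i, q i * m i ≤ n) {S : Set (∀ i, ZMod (m i))}
    {s : ∀ i, ZMod (m i)} (hs : s ∈ S) (t : ∀ i, Fin (q i)) :
    blockPoint m n s t ∈ blockLift m q n S := by
  refine ⟨fun i => ?_, by rwa [reduceCoords_blockPoint hq]⟩
  rw [val_blockPoint hq]
  exact Nat.mul_add_lt_mul_of_lt_of_lt (t i).2 (s i).val_lt

lemma blockPoint_inj (hq : ∀ i, q i * m i ≤ n) {s s' : ∀ i, ZMod (m i)}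
    {t t' : ∀ i, Fin (q i)} :
    blockPoint m n s t = blockPoint m n s' t' ↔ s = s' ∧ t = t' := by
  refine ⟨fun h => ?_, fun ⟨hs, ht⟩ => hs ▸ ht ▸ rfl⟩
  obtain rfl : s = s' := by
    rw [← reduceCoords_blockPoint hq s t, ← reduceCoords_blockPoint hq s' t', h]
  refine ⟨rfl, funext fun i => Fin.ext ?_⟩
  have := congrArg ZMod.val (congrFun h i)
  rw [val_blockPoint hq, val_blockPoint hq, add_left_inj] at this
  exact Nat.eq_of_mul_eq_mul_left (NeZero.pos (m i)) this

lemma ncard_mul_prod_le_ncard_blockLift [NeZero n] (hq : ∀ i, q i * m i ≤ n)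
    (S : Set (∀ i, ZMod (m i))) : S.ncard * ∏ i, q i ≤ (blockLift m q n S).ncard := by
  calc S.ncard * ∏ i, q i = Nat.card (S × ∀ i, Fin (q i)) := by
        simp [Nat.card_prod, Nat.card_coe_set_eq]
    _ ≤ Nat.card (blockLift m q n S) :=
        Nat.card_le_card_of_injective (fun p => ⟨_, blockPoint_mem_blockLift hq p.1.2 p.2⟩)
          fun p p' h => by
            obtain ⟨hs, ht⟩ := (blockPoint_inj hq).1 (congrArg Subtype.val h)
            exact Prod.ext (Subtype.ext hs) ht
    _ = (blockLift m q n S).ncard := Nat.card_coe_set_eq _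

end Block

theorem betaK_torusGraph_mul_prod_le {d n : ℕ} [NeZero n] {m q : Fin d → ℕ}
    (hm : ∀ i, 3 ≤ m i) (hq : ∀ i, q i * m i < n) (k : ℕ) :
    betaK (torusGraph d m) k * ∏ i, q i ≤ betaK (torusGraph d fun _ => n) k := by
  have : ∀ i, NeZero (m i) := fun i => ⟨by have := hm i; omega⟩
  obtain ⟨S, hS, hcard⟩ := exists_isKDependent_ncard_eq_betaK (torusGraph d m) k
  calc betaK (torusGraph d m) k * ∏ i, q i = S.ncard * ∏ i, q i := by rw [hcard]
    _ ≤ (blockLift m q n S).ncard := ncard_mul_prod_le_ncard_blockLift (fun i => (hq i).le) S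
    _ ≤ betaK (torusGraph d fun _ => n) k := (isKDependent_blockLift hm hq hS).ncard_le_betaK

lemma betaK_torusGraph_le_pow (d n k : ℕ) [NeZero n] :
    betaK (torusGraph d fun _ => n) k ≤ n ^ d := by
  simpa [Nat.card_fun, Nat.card_zmod] using betaK_le_card (torusGraph d fun _ => n) k

lemma tendsto_natCast_sub_one_div_div_atTop {m : ℕ} (hm : 0 < m) :
    Tendsto (fun n : ℕ => (((n - 1) / m : ℕ) : ℝ) / n) atTop (𝓝 (1 / m)) := by
  have hm' : (0 : ℝ) < m := by exact_mod_cast hm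
  have hlow : Tendsto (fun n : ℕ => 1 / (m : ℝ) - 1 / n) atTop (𝓝 (1 / m)) := by
    simpa using (tendsto_const_nhds (x := 1 / (m : ℝ))).sub tendsto_one_div_atTop_nhds_zero_nat
  refine tendsto_of_tendsto_of_tendsto_of_le_of_le' hlow tendsto_const_nhds ?_ ?_
  all_goals filter_upwards [eventually_gt_atTop 0] with n hn
  all_goals have hn' : (0 : ℝ) < n := by exact_mod_cast hn
  · have : n ≤ ((n - 1) / m + 1) * m := by
      have := Nat.div_add_mod (n - 1) m; have := Nat.mod_lt (n - 1) hm
      rw [add_mul, one_mul, mul_comm]; omega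
    rw [sub_le_iff_le_add, ← add_div, div_le_div_iff₀ hm' hn', one_mul]
    exact_mod_cast this
  · rw [div_le_div_iff₀ hn' hm', one_mul]
    exact_mod_cast (Nat.div_mul_le_self (n - 1) m).trans (Nat.sub_le n 1)

theorem stmt_2_general (d : ℕ) (k : ℕ) (m : Fin d → ℕ) (hm : ∀ i, 3 ≤ m i) :
    (betaK (torusGraph d m) k : ℝ) / (∏ i, (m i : ℝ)) ≤
      Filter.liminf
        (fun n : ℕ => (betaK (torusGraph d (fun _ => n)) k : ℝ) / (n : ℝ) ^ d)
        Filter.atTop := by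
  set β := betaK (torusGraph d m) k
  have hlim : Tendsto (fun n : ℕ => (β : ℝ) * ∏ i, (((n - 1) / m i : ℕ) : ℝ) / n) atTop
      (𝓝 ((β : ℝ) / ∏ i, (m i : ℝ))) := by
    have := (tendsto_finsetProd Finset.univ fun i _ => tendsto_natCast_sub_one_div_div_atTop
      (m := m i) (by have := hm i; omega)).const_mul (β : ℝ)
    simpa [div_eq_mul_inv, Finset.prod_inv_distrib] using this
  have hle : ∀ᶠ n : ℕ in atTop, (β : ℝ) * ∏ i, (((n - 1) / m i : ℕ) : ℝ) / n ≤
      (betaK (torusGraph d (fun _ => n)) k : ℝ) / (n : ℝ) ^ d := by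
    filter_upwards [eventually_gt_atTop 0] with n hn
    have : NeZero n := ⟨hn.ne'⟩
    rw [Finset.prod_div_distrib, Finset.prod_const, Finset.card_univ, Fintype.card_fin,
      ← mul_div_assoc]
    gcongr
    exact_mod_cast betaK_torusGraph_mul_prod_le hm
      (fun i => (Nat.div_mul_le_self _ _).trans_lt (by omega)) k
  have hbdd : IsBoundedUnder (· ≤ ·) atTop
      fun n : ℕ => (betaK (torusGraph d (fun _ => n)) k : ℝ) / (n : ℝ) ^ d := by
    refine ⟨1, eventually_map.2 ?_⟩
    filter_upwards [eventually_gt_atTop 0] with n hn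
    have : NeZero n := ⟨hn.ne'⟩
    exact div_le_one_of_le₀ (by exact_mod_cast betaK_torusGraph_le_pow d n k) (by positivity)
  rw [← hlim.liminf_eq]
  exact liminf_le_liminf hle hlim.isBoundedUnder_ge hbdd.isCoboundedUnder_ge

/-- liminf of β_k(T^(d)[n])/n^d is at least τ_k(T[n_1,…,n_d]). -/
theorem stmt_2 (d : ℕ) (hd : 1 ≤ d) (k : ℕ) (m : Fin d → ℕ) (hm : ∀ i, 3 ≤ m i) :
    (betaK (torusGraph d m) k : ℝ) / (∏ i, (m i : ℝ)) ≤
      Filter.liminf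
        (fun n : ℕ => (betaK (torusGraph d (fun _ => n)) k : ℝ) / (n : ℝ) ^ d)
        Filter.atTop :=
  stmt_2_general d k m hm
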